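/- Let n ≥ 4 be an even integer and let R_(n,2) be the (n,2)-regular graph of order n, i.e., the complete graph K_n with a perfect matching removed, so that every vertex has degree n − 2. Then rvcl(R_(n,2)) = n/2 + 1. -/

import Mathlib

namespace LocatingRainbow

open SimpleGraph

variable {V : Type*}

/-- The internal vertices of a walk: its support without the endpoints. -/
def internalVertices {G : SimpleGraph V} {u v : V} (p : G.Walk u v) : List V :=
  p.support.tail.dropLast

/-- `c` is a rainbow vertex coloring of `G` (with colors in `Fin k`) if any two distinct
vertices are joined by a path whose internal vertices have pairwise distinct colors. -/
def IsRainbowVertexColoring (G : SimpleGraph V) {k : ℕ} (c : V → Fin k) : Prop :=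
  ∀ u v : V, u ≠ v → ∃ p : G.Walk u v, p.IsPath ∧ ((internalVertices p).map c).Nodup

/-- The distance from a vertex `v` to the color class of the color `i`. -/
noncomputable def distToColor (G : SimpleGraph V) {k : ℕ} (c : V → Fin k) (v : V) (i : Fin k) :
    ℕ :=
  sInf {m | ∃ y, c y = i ∧ G.dist v y = m}

/-- The rainbow code of a vertex `v`: the vector of distances to all color classes. -/
noncomputable def rainbowCode (G : SimpleGraph V) {k : ℕ} (c : V → Fin k) (v : V) :
    Fin k → ℕ :=
  fun i => distToColor G c v i

/-- `c` is a locating rainbow coloring if it is a rainbow vertex coloring and distinct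
vertices have distinct rainbow codes. -/
def IsLocatingRainbowColoring (G : SimpleGraph V) {k : ℕ} (c : V → Fin k) : Prop :=
  IsRainbowVertexColoring G c ∧ Function.Injective (rainbowCode G c)

/-- The rainbow vertex connection number of `G`. -/
noncomputable def rvc (G : SimpleGraph V) : ℕ :=
  sInf {k | ∃ c : V → Fin k, IsRainbowVertexColoring G c}

/-- The locating rainbow connection number of `G`. -/
noncomputable def rvcl (G : SimpleGraph V) : ℕ :=
  sInf {k | ∃ c : V → Fin k, IsLocatingRainbowColoring G c}

end LocatingRainbow

namespace LocatingRainbow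

open SimpleGraph

/-- The `(n,2)`-regular graph (for even `n`): the complete graph on `Fin n` with the
perfect matching `{vᵢ v_{i+n/2}}` (indices mod `n`) removed; every vertex has degree
`n - 2`. -/
def Rn2 (n : ℕ) : SimpleGraph (Fin n) where
  Adj i j := i ≠ j ∧ (i.val + n / 2) % n ≠ j.val ∧ (j.val + n / 2) % n ≠ i.val
  symm := ⟨fun _ _ ⟨h1, h2, h3⟩ => ⟨h1.symm, h3, h2⟩⟩
  loopless := ⟨fun _ h => h.1 rfl⟩

/-- The `(n,3)`-regular graph: the complement of the cycle `C_n`, i.e. the complete graph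
with the edges of a Hamiltonian cycle removed; every vertex has degree `n - 3`. -/
def Rn3 (n : ℕ) : SimpleGraph (Fin n) := (cycleGraph n)ᶜ

/-- The `(n,t)`-regular graph for `t ∈ {2, 3}`. -/
def Rnt (n t : ℕ) : SimpleGraph (Fin n) := if t = 2 then Rn2 n else Rn3 n

end LocatingRainbow
/-!
`R_(n,2)` has diameter two, so every coloring is rainbow, and the distance from a vertex `v` to a
color class not containing it is `1`, unless the class is the singleton `{v̄}` of the antipode `v̄`
of `v`, when it is `2`.

Upper bound: give `v_1, …, v_{n/2}` distinct colors and the other half one extra color; two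
vertices of the second half are told apart by the singleton class of the antipode of either.

Lower bound: the code of a vertex whose antipode is not alone in its color class is determined by
its color, so a locating `k`-coloring is injective both on these vertices and on the uniquely
colored ones. Since the antipode map is a bijection, the two sets together have `n` elements, and
the second has fewer than `k` unless every vertex is uniquely colored; either way `n < 2k`.
-/

namespace LocatingRainbow

open SimpleGraph Finset

section Coloring

variable {V : Type*} {G : SimpleGraph V} {k : ℕ} {c : V → Fin k}

def IsUniquelyColored {α : Type*} (c : V → α) (v : V) : Prop :=
  ∀ y, c y = c v → y = v

lemma distToColor_eq_zero_iff (hG : G.Connected) {v : V} {i : Fin k} :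
    distToColor G c v i = 0 ↔ c v = i ∨ ∀ y, c y ≠ i := by
  simp only [distToColor, Nat.sInf_eq_zero, Set.eq_empty_iff_forall_notMem, Set.mem_ofPred_eq,
    (hG.preconnected _ _).dist_eq_zero_iff]
  constructor
  · rintro (⟨y, hy, rfl⟩ | h)
    · exact Or.inl hy
    · exact Or.inr fun y hy => h _ ⟨y, hy, rfl⟩
  · rintro (h | h)
    · exact Or.inl ⟨v, h, rfl⟩
    · exact Or.inr fun _ ⟨y, hy, _⟩ => h y hy

lemma distToColor_le_dist {v y : V} {i : Fin k} (hy : c y = i) :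
    distToColor G c v i ≤ G.dist v y :=
  Nat.sInf_le ⟨y, hy, rfl⟩

lemma distToColor_eq_one (hG : G.Connected) {v y : V} {i : Fin k} (hv : c v ≠ i) (hy : c y = i)
    (hadj : G.Adj v y) : distToColor G c v i = 1 := by
  have hle : distToColor G c v i ≤ 1 :=
    (distToColor_le_dist hy).trans_eq (dist_eq_one_iff_adj.mpr hadj)
  have hne : distToColor G c v i ≠ 0 :=
    fun h => ((distToColor_eq_zero_iff hG).mp h).elim hv fun h => h y hy
  omega

lemma distToColor_eq_dist_of_unique {v w : V} {i : Fin k} (hw : ∀ y, c y = i ↔ y = w) :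
    distToColor G c v i = G.dist v w := by
  refine (distToColor_le_dist ((hw w).mpr rfl)).antisymm (le_csInf ⟨_, w, (hw w).mpr rfl, rfl⟩ ?_)
  rintro _ ⟨y, hy, rfl⟩
  rw [(hw y).mp hy]

lemma color_eq_of_rainbowCode_eq (hG : G.Connected) {u v : V}
    (h : rainbowCode G c u = rainbowCode G c v) : c u = c v := by
  have hu : distToColor G c u (c u) = 0 := (distToColor_eq_zero_iff hG).mpr (Or.inl rfl)
  have hv := (distToColor_eq_zero_iff hG).mp ((congrFun h (c u)).symm.trans hu)
  exact hv.elim Eq.symm fun hne => absurd rfl (hne u)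

lemma isRainbowVertexColoring_of_dist_le_two (hG : G.Connected) (hd : ∀ u v, G.dist u v ≤ 2)
    (c : V → Fin k) : IsRainbowVertexColoring G c := by
  intro u v _
  obtain ⟨p, hp, hlen⟩ := (hG.preconnected u v).exists_path_of_dist
  refine ⟨p, hp, ?_⟩
  have hint : ((internalVertices p).map c).length ≤ 1 := by
    simp only [internalVertices, List.length_map, List.length_dropLast, List.length_tail,
      Walk.length_support]
    have := hd u v
    omega
  generalize (internalVertices p).map c = l at hint
  rcases l with _ | ⟨a, _ | ⟨b, l⟩⟩ <;> simp_all

end Coloring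

section ComplementOfMatching

variable {V : Type*} {G : SimpleGraph V} (σ : Equiv.Perm V)
  {k : ℕ} {c : V → Fin k}

lemma distToColor_eq_one_of_not_isUniquelyColored (hG : G.Connected)
    (hadj : ∀ u v, u ≠ v → v ≠ σ u → G.Adj u v) {x : V} {i : Fin k} (hx : c x ≠ i)
    (hi : ∃ y, c y = i) (hσx : ¬IsUniquelyColored c (σ x)) : distToColor G c x i = 1 := by
  obtain ⟨y, hy, hyσ⟩ : ∃ y, c y = i ∧ y ≠ σ x := by
    by_contra! h
    obtain ⟨y₀, hy₀⟩ := hi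
    have hσ : c (σ x) = i := h y₀ hy₀ ▸ hy₀
    exact hσx fun z hz => h z (hz.trans hσ)
  exact distToColor_eq_one hG hx hy (hadj x y (fun e => hx (e ▸ hy)) hyσ)

lemma rainbowCode_eq_of_not_isUniquelyColored (hG : G.Connected)
    (hadj : ∀ u v, u ≠ v → v ≠ σ u → G.Adj u v) {u v : V} (huv : c u = c v)
    (hu : ¬IsUniquelyColored c (σ u)) (hv : ¬IsUniquelyColored c (σ v)) :
    rainbowCode G c u = rainbowCode G c v := by
  funext i
  by_cases hi : ∃ y, c y = i
  · by_cases hci : c u = i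
    · rw [rainbowCode, rainbowCode, (distToColor_eq_zero_iff hG).mpr (Or.inl hci),
        (distToColor_eq_zero_iff hG).mpr (Or.inl (huv ▸ hci))]
    · rw [rainbowCode, rainbowCode,
        distToColor_eq_one_of_not_isUniquelyColored σ hG hadj hci hi hu,
        distToColor_eq_one_of_not_isUniquelyColored σ hG hadj (huv ▸ hci) hi hv]
  · push Not at hi
    rw [rainbowCode, rainbowCode, (distToColor_eq_zero_iff hG).mpr (Or.inr hi),
      (distToColor_eq_zero_iff hG).mpr (Or.inr hi)]

theorem card_lt_two_mul_of_injective_rainbowCode [Fintype V] (hG : G.Connected)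
    (hadj : ∀ u v, u ≠ v → v ≠ σ u → G.Adj u v) (hc : Function.Injective (rainbowCode G c)) :
    Fintype.card V < 2 * k := by
  classical
  have hV : 0 < Fintype.card V :=
    haveI := hG.nonempty
    Fintype.card_pos
  set L := univ.filter (IsUniquelyColored c)
  set S := univ.filter fun v => ¬IsUniquelyColored c (σ v)
  have hSL : #S + #L = Fintype.card V := by
    rw [← card_univ, ← card_filter_add_card_filter_not (s := univ) (IsUniquelyColored c), add_comm]
    congr 1
    exact card_equiv σ fun v => by simp [S]
  have hS : #S ≤ k := by
    simpa using card_le_card_of_injOn c (fun _ _ => mem_univ _) fun u hu v hv huv =>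
      hc (rainbowCode_eq_of_not_isUniquelyColored σ hG hadj huv (mem_filter.mp hu).2
        (mem_filter.mp hv).2)
  have hLinj : Set.InjOn c L := fun u hu v _ huv => ((mem_filter.mp hu).2 v huv.symm).symm
  by_cases hall : ∀ v, IsUniquelyColored c v
  · have hinj : Function.Injective c := fun u v huv => hall v u huv
    have := Fintype.card_le_of_injective c hinj
    simp only [Fintype.card_fin] at this
    omega
  · push Not at hall
    obtain ⟨w, hw⟩ := hall
    have hL : #L ≤ k - 1 := by
      have hmaps : Set.MapsTo c L (univ.erase (c w)) := fun v hv =>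
        mem_erase.mpr ⟨fun e => hw fun y hy => ((mem_filter.mp hv).2 y (hy.trans e.symm)).trans
          ((mem_filter.mp hv).2 w e.symm).symm, mem_univ _⟩
      simpa using card_le_card_of_injOn c hmaps hLinj
    omega

end ComplementOfMatching

section Rn2

variable {n : ℕ}

def antipode (v : Fin n) : Fin n :=
  ⟨(v + n / 2) % n, Nat.mod_lt _ v.pos⟩

lemma antipode_val (hn : Even n) (v : Fin n) :
    (antipode v : ℕ) = if (v : ℕ) < n / 2 then (v : ℕ) + n / 2 else (v : ℕ) - n / 2 := by
  have := Nat.even_iff.mp hn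
  have := v.isLt
  simp only [antipode]
  split_ifs with h
  · exact Nat.mod_eq_of_lt (by omega)
  · rw [Nat.mod_eq_sub_mod (by omega), Nat.mod_eq_of_lt (by omega)]
    omega

lemma antipode_involutive (hn : Even n) : Function.Involutive (antipode (n := n)) := by
  intro v
  have := Nat.even_iff.mp hn
  have := v.isLt
  rw [Fin.ext_iff, antipode_val hn, antipode_val hn]
  split_ifs <;> omega

lemma antipode_ne_self (hn : Even n) (v : Fin n) : antipode v ≠ v := by
  have := Nat.even_iff.mp hn
  have := v.isLt
  rw [ne_eq, Fin.ext_iff, antipode_val hn]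
  split_ifs <;> omega

lemma rn2_adj_iff (hn : Even n) {u v : Fin n} : (Rn2 n).Adj u v ↔ u ≠ v ∧ v ≠ antipode u := by
  have := Nat.even_iff.mp hn
  have := u.isLt
  have := v.isLt
  change u ≠ v ∧ (antipode u : ℕ) ≠ v ∧ (antipode v : ℕ) ≠ u ↔ _
  simp only [ne_eq, Fin.ext_iff, antipode_val hn]
  split_ifs <;> omega

lemma exists_rn2_adj_adj_antipode (hn : Even n) (h4 : 4 ≤ n) (u : Fin n) :
    ∃ w, (Rn2 n).Adj u w ∧ (Rn2 n).Adj w (antipode u) := by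
  obtain ⟨w, -, hw⟩ := exists_mem_notMem_of_card_lt_card (s := {u, antipode u}) (t := univ)
    (card_le_two.trans_lt (by rw [card_univ, Fintype.card_fin]; omega))
  simp only [mem_insert, mem_singleton, not_or] at hw
  refine ⟨w, (rn2_adj_iff hn).mpr ⟨Ne.symm hw.1, hw.2⟩, (rn2_adj_iff hn).mpr ⟨hw.2, ?_⟩⟩
  rw [(antipode_involutive hn).injective.ne_iff]
  exact Ne.symm hw.1

lemma exists_rn2_walk_length_le_two (hn : Even n) (h4 : 4 ≤ n) (u v : Fin n) :
    ∃ p : (Rn2 n).Walk u v, p.length ≤ 2 := by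
  by_cases huv : u = v
  · subst huv
    exact ⟨.nil, by simp⟩
  by_cases hadj : (Rn2 n).Adj u v
  · exact ⟨hadj.toWalk, by simp⟩
  obtain rfl : v = antipode u := by simpa [rn2_adj_iff hn, huv] using hadj
  obtain ⟨w, huw, hwv⟩ := exists_rn2_adj_adj_antipode hn h4 u
  exact ⟨Walk.cons huw hwv.toWalk, by simp⟩

lemma rn2_connected (hn : Even n) (h4 : 4 ≤ n) : (Rn2 n).Connected :=
  haveI : Nonempty (Fin n) := ⟨⟨0, by omega⟩⟩
  ⟨fun u v => (exists_rn2_walk_length_le_two hn h4 u v).elim fun p _ => p.reachable⟩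

lemma rn2_dist_le_two (hn : Even n) (h4 : 4 ≤ n) (u v : Fin n) : (Rn2 n).dist u v ≤ 2 :=
  (exists_rn2_walk_length_le_two hn h4 u v).elim fun p hp => (dist_le p).trans hp

lemma rn2_dist_antipode (hn : Even n) (h4 : 4 ≤ n) (u : Fin n) :
    (Rn2 n).dist u (antipode u) = 2 := by
  have h0 : (Rn2 n).dist u (antipode u) ≠ 0 := by
    rw [ne_eq, ((rn2_connected hn h4).preconnected _ _).dist_eq_zero_iff]
    exact (antipode_ne_self hn u).symm
  have h1 : (Rn2 n).dist u (antipode u) ≠ 1 := by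
    rw [ne_eq, dist_eq_one_iff_adj, rn2_adj_iff hn]
    exact fun h => h.2 rfl
  have := rn2_dist_le_two hn h4 u (antipode u)
  omega

def halfColoring (n : ℕ) (v : Fin n) : Fin (n / 2 + 1) :=
  ⟨min v (n / 2), by omega⟩

lemma halfColoring_eq_iff {a : Fin (n / 2 + 1)} (ha : (a : ℕ) < n / 2) (y : Fin n) :
    halfColoring n y = a ↔ (y : ℕ) = a := by
  simp only [halfColoring, Fin.ext_iff]
  omega

theorem injective_rainbowCode_halfColoring (hn : Even n) (h4 : 4 ≤ n) :
    Function.Injective (rainbowCode (Rn2 n) (halfColoring n)) := by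
  have := Nat.even_iff.mp hn
  intro u v h
  have hc := color_eq_of_rainbowCode_eq (rn2_connected hn h4) h
  by_contra huv
  have huv' : (u : ℕ) ≠ v := fun e => huv (Fin.ext e)
  have hu : n / 2 ≤ u ∧ n / 2 ≤ v := by
    simp only [halfColoring, Fin.ext_iff] at hc
    omega
  -- the color `u - n/2` is carried by `antipode u` alone, which is adjacent to `v` but not to `u`
  obtain ⟨a, ha⟩ : ∃ a : Fin (n / 2 + 1), (a : ℕ) = (u : ℕ) - n / 2 :=
    ⟨⟨(u : ℕ) - n / 2, by omega⟩, rfl⟩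
  have hclass : ∀ y, halfColoring n y = a ↔ y = antipode u := fun y => by
    rw [halfColoring_eq_iff (a := a) (by omega), Fin.ext_iff, antipode_val hn,
      if_neg (show ¬(u : ℕ) < n / 2 by omega), ha]
  have h2 : distToColor (Rn2 n) (halfColoring n) u a = 2 := by
    rw [distToColor_eq_dist_of_unique hclass, rn2_dist_antipode hn h4]
  have h1 : distToColor (Rn2 n) (halfColoring n) v a = 1 := by
    rw [distToColor_eq_dist_of_unique hclass, dist_eq_one_iff_adj, rn2_adj_iff hn]
    refine ⟨fun e => ?_, ?_⟩
    · have := congrArg Fin.val e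
      rw [antipode_val hn, if_neg (show ¬(u : ℕ) < n / 2 by omega)] at this
      omega
    · rw [(antipode_involutive hn).injective.ne_iff]
      exact huv
  have := congrFun h a
  simp only [rainbowCode] at this
  omega

end Rn2

end LocatingRainbow

open LocatingRainbow in
/-- For even `n ≥ 4`, the `(n,2)`-regular graph (complete graph minus a perfect
matching) satisfies `rvcl(R_(n,2)) = n/2 + 1`. -/
theorem rvcl_Rn2 {n : ℕ} (hn : 4 ≤ n) (hpar : Even n) :
    rvcl (Rn2 n) = n / 2 + 1 := by
  have hconn := rn2_connected hpar hn
  have hmem : n / 2 + 1 ∈ {k | ∃ c : Fin n → Fin k, IsLocatingRainbowColoring (Rn2 n) c} :=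
    ⟨halfColoring n, isRainbowVertexColoring_of_dist_le_two hconn (rn2_dist_le_two hpar hn) _,
      injective_rainbowCode_halfColoring hpar hn⟩
  refine (Nat.sInf_le hmem).antisymm (le_csInf ⟨_, hmem⟩ ?_)
  rintro k ⟨c, -, hc⟩
  have := card_lt_two_mul_of_injective_rainbowCode ((antipode_involutive hpar).toPerm _) hconn
    (fun u v huv hvu => (rn2_adj_iff hpar).mpr ⟨huv, hvu⟩) hc
  rw [Fintype.card_fin] at this
  have := Nat.even_iff.mp hpar
  omega
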